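/- arXiv:2011.07838 — 2 statements merged into one kernel-verified Lean document; each statement's English description precedes it below -/
import Mathlib

section
/- Let S be a set of substitutions on a finite alphabet A and s a sequence in S^ω. Every element of GenStabFin(s) belongs to StabUltLet(s); that is, every indecomposable finite word indefinitely desubstitutable along s can be written f(α) where s = f·s' with f a finite prefix of s (composed), s' the corresponding suffix, and α a letter indefinitely desubstitutable along s'. -/
universe u
variable {A : Type u}

/-- Apply a substitution (given by images of letters) to a finite word. -/
def applyList (f : A → List A) (u : List A) : List A := u.flatMap f

/-- Starting position of the image of the `n`-th letter of `v` inside `f(v)`. -/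
def blockStart (f : A → List A) (v : ℕ → A) : ℕ → ℕ
  | 0 => 0
  | n + 1 => blockStart f v n + (f (v n)).length

/-- `ApplyEq f v u` means `u = f(v)` for right-infinite words. -/
def ApplyEq (f : A → List A) (v u : ℕ → A) : Prop :=
  ∀ (n i : ℕ) (h : i < (f (v n)).length),
    u (blockStart f v n + i) = (f (v n))[i]

/-- `u` occurs as a factor of `w` at position `k`. -/
def FactorAt (w : ℕ → A) (u : List A) (k : ℕ) : Prop :=
  ∀ (i : ℕ) (h : i < u.length), u[i] = w (k + i)

def Factor (w : ℕ → A) (u : List A) : Prop := ∃ k, FactorAt w u k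

/-- `u` is a prefix of the infinite word `w`. -/
def PrefixOf (u : List A) (w : ℕ → A) : Prop :=
  ∀ (i : ℕ) (h : i < u.length), u[i] = w i

/-- Membership in the stable set of a set `S` of substitutions. -/
def InStable (S : Set (A → List A)) (w : ℕ → A) : Prop :=
  ∃ (σ : ℕ → A → List A) (ws : ℕ → ℕ → A),
    (∀ n, σ n ∈ S) ∧ ws 0 = w ∧ ∀ n, ApplyEq (σ n) (ws (n + 1)) (ws n)

/-- Composition `σ_1 ∘ ⋯ ∘ σ_n` of the first `n` substitutions of `s` (0-indexed). -/
def compSeq (s : ℕ → A → List A) : ℕ → A → List A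
  | 0 => fun a => [a]
  | n + 1 => fun a => applyList (compSeq s n) (s n a)

/-- `w` is S-adic with directive sequence `σ`. -/
def SAdicWith (σ : ℕ → A → List A) (w : ℕ → A) : Prop :=
  ∃ a : ℕ → A, (∀ n, PrefixOf (compSeq σ n (a n)) w) ∧
    ∀ N : ℕ, ∃ n, N ≤ (compSeq σ n (a n)).length


/-- Finite nonempty words indefinitely desubstitutable with directive sequence `s`. -/
def StabFin (s : ℕ → A → List A) : Set (List A) :=
  {u | ∃ us : ℕ → List A, us 0 = u ∧ (∀ n, us n ≠ []) ∧
    ∀ n, us n = applyList (s n) (us (n + 1))}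

/-- Nonempty concatenations of elements of `X`. -/
def WPlus (X : Set (List A)) : Set (List A) :=
  {u | ∃ L : List (List A), L ≠ [] ∧ (∀ x ∈ L, x ∈ X) ∧ u = L.flatten}

/-- Elements of `StabFin s` that are not concatenations of two or more
elements of `StabFin s`. -/
def GenStabFin (s : ℕ → A → List A) : Set (List A) :=
  StabFin s \ {u | ∃ x y, x ∈ StabFin s ∧ y ∈ WPlus (StabFin s) ∧ u = x ++ y}

/-- Letters indefinitely desubstitutable along `s`. -/
def StabLet (s : ℕ → A → List A) : Set A :=
  {α | ∃ as : ℕ → A, as 0 = α ∧ ∀ n, s n (as (n + 1)) = [as n]}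

/-- Words of the form `σ_1⋯σ_k(α)` with `α` indefinitely desubstitutable along the
remaining suffix of `s`. -/
def StabUltLet (s : ℕ → A → List A) : Set (List A) :=
  {u | ∃ (k : ℕ) (α : A), α ∈ StabLet (fun n => s (n + k)) ∧ u = compSeq s k α}

/-!
Since substitutions are nonerasing, the lengths of the successive desubstitutions `us n` of a
word `u ∈ StabFin s` are nonincreasing, hence constant from some rank `k` on. From then on every
substitution maps each letter to a single letter, so each letter of `us k` is itself
indefinitely desubstitutable along the shifted sequence, and `u = σ₀ ⋯ σ_{k-1}(us k)` is the
concatenation of the images of these letters, all of which lie in `StabFin s`. Indecomposability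
of `u` then forces `us k` to be a single letter.
-/

section ApplyList

variable {f g : A → List A}

lemma applyList_cons (a : A) (t : List A) :
    applyList f (a :: t) = f a ++ applyList f t :=
  List.flatMap_cons ..

lemma applyList_singleton (a : A) : applyList f [a] = f a := by
  simp [applyList]

lemma applyList_applyList (u : List A) :
    applyList f (applyList g u) = applyList (fun a => applyList f (g a)) u := by
  simp [applyList, List.flatMap_assoc]

lemma length_le_length_applyList (hf : ∀ a, f a ≠ []) (u : List A) :
    u.length ≤ (applyList f u).length := by
  induction u with
  | nil => simp [applyList]
  | cons a t ih =>
    have := List.length_pos_iff.mpr (hf a)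
    simp only [applyList_cons, List.length_append, List.length_cons]
    omega

lemma applyList_ne_nil (hf : ∀ a, f a ≠ []) {u : List A} (hu : u ≠ []) :
    applyList f u ≠ [] :=
  List.ne_nil_of_length_pos
    ((List.length_pos_iff.mpr hu).trans_le (length_le_length_applyList hf u))

lemma apply_getD_of_length_applyList_le (hf : ∀ a, f a ≠ []) {u : List A}
    (h : (applyList f u).length ≤ u.length) {i : ℕ} (hi : i < u.length) (d : A) :
    f (u.getD i d) = [(applyList f u).getD i d] := by
  induction u generalizing i with
  | nil => simp at hi
  | cons a t ih =>
    have hlen := length_le_length_applyList hf t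
    simp only [applyList_cons, List.length_append, List.length_cons] at h
    obtain ⟨x, hx⟩ : ∃ x, f a = [x] := List.length_eq_one_iff.mp (by
      have := List.length_pos_iff.mpr (hf a); omega)
    rw [hx] at h
    cases i with
    | zero => simp [applyList_cons, hx]
    | succ i =>
      simp only [List.getD_cons_succ, applyList_cons, hx, List.singleton_append]
      exact ih (by simp only [List.length_singleton] at h; omega) (by simpa using hi)

end ApplyList

section StabFin

variable {s : ℕ → A → List A} {us : ℕ → List A}

lemma applyList_compSeq_eq (hus : ∀ n, us n = applyList (s n) (us (n + 1))) (k : ℕ) :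
    us 0 = applyList (compSeq s k) (us k) := by
  induction k with
  | zero => simp [applyList, compSeq]
  | succ k ih => rw [ih, hus k, applyList_applyList]; rfl

lemma exists_length_eq_forall_add (hf : ∀ n a, s n a ≠ [])
    (hus : ∀ n, us n = applyList (s n) (us (n + 1))) :
    ∃ k, ∀ j, (us (k + j)).length = (us k).length := by
  have hanti : Antitone fun n => (us n).length := antitone_nat_of_succ_le fun n => by
    rw [hus n]; exact length_le_length_applyList (hf n) _
  refine ⟨Function.argmin (fun n => (us n).length), fun j => ?_⟩
  exact le_antisymm (hanti (Nat.le_add_right _ j)) (Function.argmin_le (fun n => (us n).length) _)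

lemma mem_stabLet_of_length_eq (hf : ∀ n a, s n a ≠ [])
    (hus : ∀ n, us n = applyList (s n) (us (n + 1))) {k : ℕ}
    (hk : ∀ j, (us (k + j)).length = (us k).length) {a : A} (ha : a ∈ us k) :
    a ∈ StabLet (fun n => s (n + k)) := by
  obtain ⟨i, hi, rfl⟩ := List.getElem_of_mem ha
  refine ⟨fun j => (us (k + j)).getD i (us k)[i], by simp [hi], fun j => ?_⟩
  have hstep := apply_getD_of_length_applyList_le (hf (k + j))
    (u := us (k + j + 1)) (by rw [← hus]; exact ((hk j).trans (hk (j + 1)).symm).le)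
    (hi.trans_eq (hk (j + 1)).symm) (us k)[i]
  rw [← hus] at hstep
  show s (j + k) _ = _
  rw [Nat.add_comm j k]
  exact hstep

lemma singleton_mem_stabFin {α : A} (hα : α ∈ StabLet s) : [α] ∈ StabFin s := by
  obtain ⟨as, rfl, has⟩ := hα
  exact ⟨fun n => [as n], rfl, fun n => List.cons_ne_nil _ _,
    fun n => by rw [applyList_singleton, has]⟩

lemma applyList_mem_stabFin_of_mem_stabFin_succ (hf : ∀ a, s 0 a ≠ []) {v : List A}
    (hv : v ∈ StabFin (fun n => s (n + 1))) : applyList (s 0) v ∈ StabFin s := by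
  obtain ⟨vs, rfl, hne, hvs⟩ := hv
  refine ⟨fun n => Nat.casesOn n (applyList (s 0) (vs 0)) vs, rfl, fun n => ?_, fun n => ?_⟩
  · cases n with
    | zero => exact applyList_ne_nil hf (hne 0)
    | succ n => exact hne n
  · cases n with
    | zero => rfl
    | succ n => exact hvs n

lemma applyList_compSeq_mem_stabFin (hf : ∀ n a, s n a ≠ []) (k : ℕ) {v : List A}
    (hv : v ∈ StabFin (fun n => s (n + k))) : applyList (compSeq s k) v ∈ StabFin s := by
  induction k generalizing v with
  | zero => simpa [applyList, compSeq] using hv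
  | succ k ih =>
    have hshift : (fun n => s (n + 1 + k)) = fun n => s (n + (k + 1)) := by
      funext n; rw [Nat.add_right_comm, Nat.add_assoc]
    have hstep := applyList_mem_stabFin_of_mem_stabFin_succ (s := fun n => s (n + k))
      (fun a => hf _ a) (v := v) (by rwa [hshift])
    rw [Nat.zero_add] at hstep
    simpa only [compSeq, applyList_applyList] using ih hstep

end StabFin

theorem stmt7_general {A : Type u} (S : Set (A → List A))
    (hS : ∀ f ∈ S, ∀ a, f a ≠ []) (s : ℕ → A → List A) (hs : ∀ n, s n ∈ S) :
    GenStabFin s ⊆ StabUltLet s := by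
  rintro _ ⟨⟨us, rfl, hne, hus⟩, hgen⟩
  have hf : ∀ n a, s n a ≠ [] := fun n => hS (s n) (hs n)
  obtain ⟨k, hk⟩ := exists_length_eq_forall_add hf hus
  have hlet : ∀ a ∈ us k, a ∈ StabLet (fun n => s (n + k)) :=
    fun a ha => mem_stabLet_of_length_eq hf hus hk ha
  have hfin : ∀ a ∈ us k, compSeq s k a ∈ StabFin s := fun a ha => by
    simpa only [applyList_singleton] using
      applyList_compSeq_mem_stabFin hf k (singleton_mem_stabFin (hlet a ha))
  have hu := applyList_compSeq_eq hus k
  rcases h : us k with _ | ⟨α, _ | ⟨β, t⟩⟩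
  · exact absurd h (hne k)
  · exact ⟨k, α, hlet α (by simp [h]), by rw [hu, h, applyList_singleton]⟩
  · refine absurd ⟨compSeq s k α, applyList (compSeq s k) (β :: t), hfin α (by simp [h]),
      ⟨(β :: t).map (compSeq s k), List.cons_ne_nil _ _, fun x hx => ?_, List.flatMap_def⟩,
      by rw [hu, h, applyList_cons]⟩ hgen
    obtain ⟨b, hb, rfl⟩ := List.mem_map.mp hx
    exact hfin b (by simp [h, hb])

/-- `GenStabFin(s) ⊆ StabUltLet(s)`. -/
theorem stmt7 {A : Type u} [Fintype A] (S : Set (A → List A))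
    (hS : ∀ f ∈ S, ∀ a, f a ≠ []) (s : ℕ → A → List A) (hs : ∀ n, s n ∈ S) :
    GenStabFin s ⊆ StabUltLet s :=
  stmt7_general S hS s hs
end

section
/- Let S be a set of substitutions on a finite alphabet A. If for every sequence s in S^ω the set StabLet(s) of letters indefinitely desubstitutable along s is empty, then the stable set of S is exactly the set of S-adic words. -/
universe u
variable {A : Type u}

/-!
Along a tower `w = σ₀(w₁)`, `w₁ = σ₁(w₂)`, … the first letters `aₙ` of the `wₙ` satisfy
`σₙ(aₙ₊₁) = aₙ ⋯`, so the words `σ₀⋯σₙ₋₁(aₙ)` form a nondecreasing chain of prefixes of `w`.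
If their lengths stayed bounded, eventually `σₙ(aₙ₊₁) = aₙ`, and `aₙ` would be a letter
indefinitely desubstitutable along a tail of the directive sequence.

Conversely, the finite words `σₖ⋯σₙ₋₁(aₙ)` desubstitute the prefixes `σ₀⋯σₙ₋₁(aₙ)` of an
S-adic word `w`, and for fixed `k` their lengths are unbounded in `n`, because `σ₀⋯σₖ₋₁`
lengthens words by at most a constant factor. Over a finite alphabet, the limit of these
finite towers along an ultrafilter is an infinite tower for `w`.
-/

open Filter

section FiniteWords

lemma applyList_append (f : A → List A) (L M : List A) :
    applyList f (L ++ M) = applyList f L ++ applyList f M :=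
  List.flatMap_append

lemma applyList_eq_nil_iff {f : A → List A} (hf : ∀ a, f a ≠ []) {L : List A} :
    applyList f L = [] ↔ L = [] := by
  rw [applyList, List.flatMap_eq_nil_iff, List.eq_nil_iff_forall_not_mem]
  exact forall_congr' fun a => imp_congr_right fun _ => iff_false_intro (hf a)

lemma length_applyList_le {f : A → List A} {M : ℕ} (hf : ∀ a, (f a).length ≤ M) (L : List A) :
    (applyList f L).length ≤ L.length * M := by
  rw [applyList, List.length_flatMap]
  refine (List.sum_le_card_nsmul _ M (List.forall_mem_map.2 fun a _ => hf a)).trans_eq ?_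
  simp

lemma applyList_compSeq_succ (s : ℕ → A → List A) (n : ℕ) (L : List A) :
    applyList (compSeq s (n + 1)) L = applyList (compSeq s n) (applyList (s n) L) :=
  List.flatMap_assoc.symm

lemma compSeq_add (s : ℕ → A → List A) (k m : ℕ) (a : A) :
    compSeq s (k + m) a = applyList (compSeq s k) (compSeq (fun n => s (n + k)) m a) := by
  induction m generalizing a with
  | zero => exact (List.flatMap_singleton _ a).symm
  | succ m ih =>
    rw [← Nat.add_assoc]
    simp only [compSeq, applyList]
    rw [List.flatMap_assoc, Nat.add_comm m k]
    exact congrArg (List.flatMap · _) (funext ih)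

lemma compSeq_shift_succ (s : ℕ → A → List A) (k m : ℕ) (a : A) :
    compSeq (fun n => s (n + k)) (m + 1) a =
      applyList (s k) (compSeq (fun n => s (n + (k + 1))) m a) := by
  rw [Nat.add_comm m, compSeq_add]
  simp [compSeq, applyList, Nat.add_right_comm _ 1 k, Nat.add_assoc]

lemma compSeq_ne_nil {s : ℕ → A → List A} (hs : ∀ n a, s n a ≠ []) (n : ℕ) (a : A) :
    compSeq s n a ≠ [] := by
  induction n generalizing a with
  | zero => exact List.cons_ne_nil a []
  | succ n ih => exact (applyList_eq_nil_iff ih).not.2 (hs n a)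

lemma compSeq_succ_of_eq_cons {s : ℕ → A → List A} {n : ℕ} {a b : A} {t : List A}
    (h : s n b = a :: t) :
    compSeq s (n + 1) b = compSeq s n a ++ applyList (compSeq s n) t := by
  simp [compSeq, applyList, h]

end FiniteWords

section InfiniteWords

variable {f : A → List A} {v u : ℕ → A}

lemma blockStart_eq_length (f : A → List A) (v : ℕ → A) (n : ℕ) :
    blockStart f v n = (applyList f ((List.range n).map v)).length := by
  induction n with
  | zero => rfl
  | succ n ih => simp [blockStart, ih, List.range_succ, applyList]

lemma PrefixOf.eq_map_range {L : List A} (h : PrefixOf L v) : L = (List.range L.length).map v :=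
  List.ext_getElem (by simp) fun n h1 _ => by simpa using h n h1

lemma getElem_applyList_blockStart {L : List A} {n : ℕ} (hn : n < L.length)
    (hL : ∀ m (hm : m < L.length), m ≤ n → L[m] = v m) {i : ℕ} (hi : i < (f (v n)).length) :
    ∃ h : blockStart f v n + i < (applyList f L).length,
      (applyList f L)[blockStart f v n + i] = (f (v n))[i] := by
  have htake : L.take (n + 1) = (List.range n).map v ++ [v n] := by
    rw [← List.map_singleton, ← List.map_append, ← List.range_succ]
    refine List.ext_getElem (by simp only [List.length_take, List.length_map, List.length_range]; omega)
      fun m h1 _ => ?_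
    rw [List.length_take] at h1
    simpa using hL m (by omega) (by omega)
  have hsplit : applyList f L = (applyList f ((List.range n).map v) ++ f (v n)) ++
      applyList f (L.drop (n + 1)) := by
    conv_lhs => rw [← List.take_append_drop (n + 1) L]
    rw [applyList_append, htake, applyList_append, applyList, applyList, List.flatMap_singleton]
  have hlen := blockStart_eq_length f v n
  refine ⟨by rw [hsplit, List.length_append, List.length_append, ← hlen]; omega, ?_⟩
  rw [List.getElem_of_eq hsplit]
  simp [hlen, hi]

lemma ApplyEq.prefixOf_applyList (hA : ApplyEq f v u) {L : List A} (hL : PrefixOf L v) :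
    PrefixOf (applyList f L) u := by
  suffices ∀ n, PrefixOf (applyList f ((List.range n).map v)) u by
    rw [hL.eq_map_range]; exact this _
  intro n
  induction n with
  | zero => intro i hi; simp [applyList] at hi
  | succ n ih =>
    have hsplit : applyList f ((List.range (n + 1)).map v) =
        applyList f ((List.range n).map v) ++ f (v n) := by
      simp [List.range_succ, applyList]
    intro p hp
    have hp' := hp
    rw [hsplit, List.length_append] at hp'
    rw [List.getElem_of_eq hsplit]
    by_cases hpn : p < (applyList f ((List.range n).map v)).length
    · rw [List.getElem_append_left hpn]
      exact ih p hpn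
    · rw [List.getElem_append_right (by omega)]
      have := hA n (p - (applyList f ((List.range n).map v)).length) (by omega)
      rw [blockStart_eq_length, Nat.add_sub_cancel' (by omega)] at this
      exact this.symm

lemma ApplyEq.eq_cons (hA : ApplyEq f v u) (hne : f (v 0) ≠ []) :
    f (v 0) = u 0 :: (f (v 0)).tail := by
  obtain ⟨b, t, hbt⟩ := List.exists_cons_of_ne_nil hne
  have h0 := hA 0 0 (by simp [hbt])
  simp only [blockStart, Nat.add_zero, List.getElem_of_eq hbt, List.getElem_cons_zero] at h0
  simp [hbt, h0]

end InfiniteWords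

lemma Ultrafilter.exists_eventually_eq {ι β : Type*} [Finite β] (U : Ultrafilter ι) (g : ι → β) :
    ∃ b, ∀ᶠ j in U, g j = b := by
  obtain ⟨b, hb⟩ := (U.map g).eq_pure_of_finite
  exact ⟨b, Ultrafilter.mem_map.1 (hb ▸ Ultrafilter.mem_pure.2 rfl : {b} ∈ U.map g)⟩

section Towers

variable {σ : ℕ → A → List A}

lemma prefixOf_compSeq_of_tower {ws : ℕ → ℕ → A}
    (hws : ∀ n, ApplyEq (σ n) (ws (n + 1)) (ws n)) (n : ℕ) :
    PrefixOf (compSeq σ n (ws n 0)) (ws 0) := by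
  suffices ∀ L, PrefixOf L (ws n) → PrefixOf (applyList (compSeq σ n) L) (ws 0) by
    simpa [applyList] using this [ws n 0] fun i hi => by
      obtain rfl : i = 0 := by simpa using hi
      rfl
  induction n with
  | zero => intro L hL; simpa [compSeq, applyList] using hL
  | succ n ih =>
    intro L hL
    rw [applyList_compSeq_succ]
    exact ih _ ((hws n).prefixOf_applyList hL)

lemma sAdicWith_of_tower {ws : ℕ → ℕ → A} (hσ : ∀ n a, σ n a ≠ [])
    (hlet : ∀ k, StabLet (fun n => σ (n + k)) = ∅)
    (hws : ∀ n, ApplyEq (σ n) (ws (n + 1)) (ws n)) : SAdicWith σ (ws 0) := by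
  set len : ℕ → ℕ := fun n => (compSeq σ n (ws n 0)).length
  have hcons (n : ℕ) : σ n (ws (n + 1) 0) = ws n 0 :: (σ n (ws (n + 1) 0)).tail :=
    (hws n).eq_cons (hσ n _)
  have hlen_succ (n : ℕ) : len (n + 1) =
      len n + (applyList (compSeq σ n) (σ n (ws (n + 1) 0)).tail).length := by
    simp only [len, compSeq_succ_of_eq_cons (hcons n), List.length_append]
  refine ⟨fun n => ws n 0, prefixOf_compSeq_of_tower hws, ?_⟩
  by_contra! ⟨N, hN⟩
  have hmono : Monotone len := monotone_nat_of_le_succ fun n => by rw [hlen_succ]; omega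
  have hconst : ∀ᶠ n in atTop, len n = ⨆ m, len m :=
    tendsto_pure.1 (nhds_discrete ℕ ▸ tendsto_atTop_ciSup hmono ⟨N, by
      rintro _ ⟨n, rfl⟩; exact (hN n).le⟩)
  obtain ⟨n₀, hn₀⟩ := eventually_atTop.1 (hconst.and ((tendsto_add_atTop_nat 1).eventually hconst))
  have hsingle (n : ℕ) (hn : n₀ ≤ n) : σ n (ws (n + 1) 0) = [ws n 0] := by
    have := hlen_succ n
    rw [(hn₀ n hn).1, (hn₀ n hn).2, Nat.left_eq_add, List.length_eq_zero_iff,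
      applyList_eq_nil_iff (compSeq_ne_nil hσ n)] at this
    rw [hcons n, this]
  have hstab : ws n₀ 0 ∈ StabLet (fun n => σ (n + n₀)) := ⟨fun n => ws (n + n₀) 0, by simp,
    fun n => by simpa [Nat.add_right_comm n 1] using hsingle (n + n₀) (Nat.le_add_left _ _)⟩
  simp [hlet n₀] at hstab

lemma exists_tower_of_approx [Finite A] {ι : Type*} {l : Filter ι} [l.NeBot] {w : ℕ → A}
    (W : ι → ℕ → List A) (hW₀ : ∀ j, PrefixOf (W j 0) w)
    (hrel : ∀ k, ∀ᶠ j in l, W j k = applyList (σ k) (W j (k + 1)))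
    (hlen : ∀ k N, ∀ᶠ j in l, N ≤ (W j k).length) :
    ∃ ws : ℕ → ℕ → A, ws 0 = w ∧ ∀ k, ApplyEq (σ k) (ws (k + 1)) (ws k) := by
  set U := Ultrafilter.of l
  have hU {p : ι → Prop} (h : ∀ᶠ j in l, p j) : ∀ᶠ j in U, p j := Ultrafilter.of_le l h
  -- Padding with `w 0` is harmless: entries are only read where the approximants are long enough.
  choose ws hws using fun k i => U.exists_eventually_eq fun j => (W j k).getD i (w 0)
  refine ⟨ws, funext fun i => ?_, fun k n i hi => ?_⟩
  · obtain ⟨j, hj, hjlen⟩ := ((hws 0 i).and (hU (hlen 0 (i + 1)))).exists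
    rw [← hj, List.getD_eq_getElem _ _ hjlen, hW₀ j i hjlen]
  · have hagree : ∀ᶠ j in U, ∀ m ∈ Set.Iic n, (W j (k + 1)).getD m (w 0) = ws (k + 1) m :=
      (eventually_all_finite (Set.finite_Iic n)).2 fun m _ => hws (k + 1) m
    obtain ⟨j, hj, hjag, hjlen, hjrel⟩ := ((hws k _).and
      (hagree.and ((hU (hlen (k + 1) (n + 1))).and (hU (hrel k))))).exists
    obtain ⟨hlt, heq⟩ := getElem_applyList_blockStart (L := W j (k + 1)) hjlen
      (fun m hm hmn => by rw [← hjag m hmn, List.getD_eq_getElem]) hi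
    rw [← hj, ← heq, List.getD_eq_getElem _ _ (hjrel ▸ hlt)]
    exact List.getElem_of_eq hjrel _

lemma exists_tower_of_sAdicWith [Finite A] {w : ℕ → A}
    (h : SAdicWith σ w) :
    ∃ ws : ℕ → ℕ → A, ws 0 = w ∧ ∀ k, ApplyEq (σ k) (ws (k + 1)) (ws k) := by
  obtain ⟨a, hpre, hunb⟩ := h
  choose φ hφ using hunb
  -- `W j k = σₖ ⋯ σ_{φ j - 1} (a (φ j))`, meaningful only for `k ≤ φ j`.
  set W : ℕ → ℕ → List A := fun j k => compSeq (fun n => σ (n + k)) (φ j - k) (a (φ j))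
  have hW₀ (j : ℕ) : W j 0 = compSeq σ (φ j) (a (φ j)) := rfl
  have hφ_ge (k : ℕ) : ∀ᶠ j in atTop, k ≤ φ j := by
    refine eventually_atTop.2 ⟨∑ n ∈ Finset.range k, (compSeq σ n (a n)).length + 1,
      fun j hj => ?_⟩
    by_contra! hjk
    have := Finset.single_le_sum (f := fun n => (compSeq σ n (a n)).length)
      (fun _ _ => Nat.zero_le _) (Finset.mem_range.2 hjk)
    have := hφ j
    omega
  have hbound (k : ℕ) : ∃ C, ∀ j, k ≤ φ j → (W j 0).length ≤ (W j k).length * C := by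
    obtain ⟨C, hC⟩ := (Set.finite_range fun b => (compSeq σ k b).length).bddAbove
    refine ⟨C, fun j hj => ?_⟩
    obtain ⟨m, hm⟩ := Nat.exists_eq_add_of_le hj
    simp only [W, hm, Nat.add_sub_cancel_left, Nat.sub_zero, compSeq_add]
    exact length_applyList_le (fun b => hC ⟨b, rfl⟩) _
  refine exists_tower_of_approx W (l := atTop) (fun j => hpre (φ j)) (fun k => ?_) (fun k N => ?_)
  · filter_upwards [hφ_ge (k + 1)] with j hj
    simp only [W]
    rw [show φ j - k = φ j - (k + 1) + 1 by omega, compSeq_shift_succ]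
  · obtain ⟨C, hC⟩ := hbound k
    filter_upwards [hφ_ge k, eventually_ge_atTop (N * C + 1)] with j hjk hj
    by_contra! hlt
    have := Nat.mul_le_mul_right C hlt.le
    have := hC j hjk
    have := hW₀ j ▸ hφ j
    omega

end Towers

/-- if no letter is indefinitely desubstitutable along any sequence
in `S^ω`, then the stable set of `S` is exactly the set of S-adic words. -/
theorem stmt10 {A : Type u} [Fintype A] (S : Set (A → List A))
    (hS : ∀ f ∈ S, ∀ a, f a ≠ [])
    (hlet : ∀ σ : ℕ → A → List A, (∀ n, σ n ∈ S) → StabLet σ = ∅) :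
    ∀ w : ℕ → A, InStable S w ↔ ∃ σ, (∀ n, σ n ∈ S) ∧ SAdicWith σ w := by
  intro w
  constructor
  · rintro ⟨σ, ws, hσ, rfl, hws⟩
    exact ⟨σ, hσ, sAdicWith_of_tower (fun n => hS _ (hσ n))
      (fun k => hlet _ fun n => hσ (n + k)) hws⟩
  · rintro ⟨σ, hσ, h⟩
    obtain ⟨ws, hw, hws⟩ := exists_tower_of_sAdicWith h
    exact ⟨σ, ws, hσ, hw, hws⟩
end
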